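/- arXiv:1402.6763 — 2 statements merged into one kernel-verified Lean document; each statement's English description precedes it below -/
import Mathlib

section
/- Let u ∈ R^{XA} satisfy Σ u(x,a) = 1, Σ_{(x,a): u(x,a)<0} |u(x,a)| ≤ ε', and ||u^T(P−B)||_1 ≤ ε''. Let h = [u]_+/||[u]_+||_1. Then ||h^T(B−P)||_1 ≤ 2ε' + ε''. -/
/-!
Write `[u]₊ = u + [-u]₊`. The first part contributes at most `ε''` to `‖[u]₊ᵀ(B−P)‖₁`; the second
contributes at most `2‖[-u]₊‖₁ ≤ 2ε'`, since every row of `B − P` is a difference of two probability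
vectors. Normalising divides by `‖[u]₊‖₁ = 1 + ‖[-u]₊‖₁ ≥ 1`, which can only decrease the bound.
-/

open Finset

section

variable {ι κ : Type*} [Fintype ι] [Fintype κ]

theorem sum_abs_sub_le_two_of_stochastic (p q : κ → ℝ) (hp0 : ∀ j, 0 ≤ p j) (hp1 : ∑ j, p j = 1)
    (hq0 : ∀ j, 0 ≤ q j) (hq1 : ∑ j, q j = 1) : ∑ j, |p j - q j| ≤ 2 :=
  calc ∑ j, |p j - q j| ≤ ∑ j, (p j + q j) := sum_le_sum fun j _ => by
        simpa only [abs_of_nonneg (hp0 j), abs_of_nonneg (hq0 j)] using abs_sub (p j) (q j)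
    _ = 2 := by rw [sum_add_distrib, hp1, hq1]; norm_num

theorem sum_abs_vecMul_le (v : ι → ℝ) (M : Matrix ι κ ℝ) {c : ℝ}
    (hM : ∀ i, ∑ j, |M i j| ≤ c) : ∑ j, |∑ i, v i * M i j| ≤ (∑ i, |v i|) * c :=
  calc ∑ j, |∑ i, v i * M i j| ≤ ∑ j, ∑ i, |v i| * |M i j| :=
        sum_le_sum fun j _ => (abs_sum_le_sum_abs _ _).trans_eq (by simp only [abs_mul])
    _ = ∑ i, |v i| * ∑ j, |M i j| := by rw [sum_comm]; simp only [mul_sum]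
    _ ≤ ∑ i, |v i| * c := sum_le_sum fun i _ => mul_le_mul_of_nonneg_left (hM i) (abs_nonneg _)
    _ = (∑ i, |v i|) * c := (sum_mul _ _ _).symm

theorem sum_abs_vecMul_posPart_le (v : ι → ℝ) (M : Matrix ι κ ℝ) {c : ℝ}
    (hM : ∀ i, ∑ j, |M i j| ≤ c) :
    ∑ j, |∑ i, max (v i) 0 * M i j|
      ≤ ∑ j, |∑ i, v i * M i j| + (∑ i, max (-v i) 0) * c := by
  have hsplit : ∀ j, ∑ i, max (v i) 0 * M i j
      = ∑ i, v i * M i j + ∑ i, max (-v i) 0 * M i j := fun j => by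
    rw [← sum_add_distrib]
    refine sum_congr rfl fun i _ => ?_
    linear_combination M i j * max_zero_sub_max_neg_zero_eq_self (v i)
  have hneg := sum_abs_vecMul_le (fun i => max (-v i) 0) M hM
  simp only [abs_of_nonneg (le_max_right _ (0 : ℝ))] at hneg
  calc ∑ j, |∑ i, max (v i) 0 * M i j|
      ≤ ∑ j, (|∑ i, v i * M i j| + |∑ i, max (-v i) 0 * M i j|) :=
        sum_le_sum fun j _ => (hsplit j).symm ▸ abs_add_le _ _
    _ ≤ _ := by rw [sum_add_distrib]; gcongr

theorem sum_max_neg_zero_eq_sum_filter_abs (v : ι → ℝ) :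
    ∑ i, max (-v i) 0 = ∑ i ∈ univ.filter (fun i => v i < 0), |v i| := by
  rw [sum_filter]
  refine sum_congr rfl fun i _ => ?_
  split_ifs with hi
  · rw [abs_of_neg hi, max_eq_left (by linarith)]
  · exact max_eq_right (by linarith)

theorem sum_abs_max_zero_eq (v : ι → ℝ) :
    ∑ i, |max (v i) 0| = ∑ i, v i + ∑ i, max (-v i) 0 := by
  rw [← sum_add_distrib]
  refine sum_congr rfl fun i _ => ?_
  rw [abs_of_nonneg (le_max_right _ _)]
  linear_combination max_zero_sub_max_neg_zero_eq_self (v i)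

end

theorem stmt_1_general (X A : ℕ)
    (P : Matrix (Fin X × Fin A) (Fin X) ℝ)
    (hPnonneg : ∀ r x', 0 ≤ P r x') (hProw : ∀ r, ∑ x', P r x' = 1)
    (B : Matrix (Fin X × Fin A) (Fin X) ℝ)
    (hB : ∀ r x', B r x' = if r.1 = x' then 1 else 0)
    (u : Fin X × Fin A → ℝ) (ε' ε'' : ℝ)
    (hsum : ∑ r, u r = 1)
    (hneg : ∑ r ∈ Finset.univ.filter (fun r => u r < 0), |u r| ≤ ε')
    (hstat : ∑ x', |∑ r, u r * (P r x' - B r x')| ≤ ε'')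
    (h : Fin X × Fin A → ℝ)
    (hdef : ∀ r, h r = max (u r) 0 / (∑ r', |max (u r') 0|)) :
    ∑ x', |∑ r, h r * (B r x' - P r x')| ≤ 2 * ε' + ε'' := by
  set N := ∑ r, max (-u r) 0
  have hN : N ≤ ε' := (sum_max_neg_zero_eq_sum_filter_abs u).trans_le hneg
  have hS : 1 ≤ ∑ r, |max (u r) 0| := by
    rw [sum_abs_max_zero_eq, hsum]
    linarith [sum_nonneg fun r (_ : r ∈ univ) => le_max_right (-u r) 0]
  have hrow : ∀ r, ∑ x', |B r x' - P r x'| ≤ 2 := fun r =>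
    sum_abs_sub_le_two_of_stochastic _ _ (fun x' => by rw [hB]; positivity)
      (by simp [hB]) (hPnonneg r) (hProw r)
  have hstat' : ∑ x', |∑ r, u r * (B r x' - P r x')| ≤ ε'' := by
    simpa only [← neg_sub (P _ _), mul_neg, sum_neg_distrib, abs_neg] using hstat
  have hnum := sum_abs_vecMul_posPart_le u (B - P) hrow
  simp only [Matrix.sub_apply] at hnum
  simp_rw [hdef, div_mul_eq_mul_div, ← sum_div, abs_div, abs_of_pos (one_pos.trans_le hS),
    ← sum_div]
  calc _ ≤ ∑ x', |∑ r, max (u r) 0 * (B r x' - P r x')| :=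
        div_le_self (sum_nonneg fun _ _ => abs_nonneg _) hS
    _ ≤ 2 * ε' + ε'' := by linarith

/-- if `u` sums to 1, has negative mass at most `ε'`, and
`‖uᵀ(P−B)‖₁ ≤ ε''`, then `h = [u]₊/‖[u]₊‖₁` satisfies
`‖hᵀ(B−P)‖₁ ≤ 2ε' + ε''`. -/
theorem stmt_1 (X A : ℕ)
    (P : Matrix (Fin X × Fin A) (Fin X) ℝ)
    (hPnonneg : ∀ r x', 0 ≤ P r x') (hProw : ∀ r, ∑ x', P r x' = 1)
    (B : Matrix (Fin X × Fin A) (Fin X) ℝ)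
    (hB : ∀ r x', B r x' = if r.1 = x' then 1 else 0)
    (u : Fin X × Fin A → ℝ) (ε' ε'' : ℝ) (hε' : 0 ≤ ε') (hε'' : 0 ≤ ε'')
    (hsum : ∑ r, u r = 1)
    (hneg : ∑ r ∈ Finset.univ.filter (fun r => u r < 0), |u r| ≤ ε')
    (hstat : ∑ x', |∑ r, u r * (P r x' - B r x')| ≤ ε'')
    (h : Fin X × Fin A → ℝ)
    (hdef : ∀ r, h r = max (u r) 0 / (∑ r', |max (u r') 0|)) :
    ∑ x', |∑ r, h r * (B r x' - P r x')| ≤ 2 * ε' + ε'' :=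
  stmt_1_general X A P hPnonneg hProw B hB u ε' ε'' hsum hneg hstat h hdef
end

section
/- Suppose h ∈ Δ_{XA} is a probability distribution over state-action pairs satisfying ||h^T(B−P)||_1 ≤ c, and let ν_k denote the state-action distribution obtained by running the policy induced by h for k steps starting from initial distribution h (i.e., ν_0 = h and ν_{k+1}^T = ν_k^T P M^h where M^h is the policy matrix of h). Then ||ν_k − h||_1 ≤ k·c for all k ≥ 0. -/
/-!
Since `hᵀ B M^h = hᵀ`, one step of the chain satisfies
`ν_{k+1} - h = (ν_k - h)ᵀ P M^h + hᵀ (P - B) M^h`. Multiplication by the row-stochastic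
matrices `P` and `M^h` does not increase the `ℓ¹` norm, so each step adds at most
`‖hᵀ(B - P)‖₁ ≤ c` to the distance from `h`.
-/

open Finset Matrix

section Stochastic

variable {ι κ : Type*} [Fintype ι] [Fintype κ]

theorem sum_abs_vecMul_le_of_stochastic (Q : Matrix ι κ ℝ) (hQ : ∀ i j, 0 ≤ Q i j)
    (hQrow : ∀ i, ∑ j, Q i j = 1) (v : ι → ℝ) : ∑ j, |(v ᵥ* Q) j| ≤ ∑ i, |v i| :=
  calc ∑ j, |(v ᵥ* Q) j| ≤ ∑ j, ∑ i, |v i| * Q i j := by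
        refine sum_le_sum fun j _ => (abs_sum_le_sum_abs _ _).trans_eq ?_
        simp only [abs_mul, abs_of_nonneg (hQ _ j)]
    _ = ∑ i, |v i| := by
        rw [sum_comm]
        simp only [← mul_sum, hQrow, mul_one]

theorem sum_abs_vecMul_vecMul_sub_le (P B : Matrix ι κ ℝ) (M : Matrix κ ι ℝ)
    (hP : ∀ i j, 0 ≤ P i j) (hProw : ∀ i, ∑ j, P i j = 1)
    (hM : ∀ i j, 0 ≤ M i j) (hMrow : ∀ i, ∑ j, M i j = 1)
    {h : ι → ℝ} (hfix : h ᵥ* B ᵥ* M = h) (v : ι → ℝ) :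
    ∑ i, |(v ᵥ* P ᵥ* M) i - h i| ≤ ∑ i, |v i - h i| + ∑ j, |(h ᵥ* (B - P)) j| := by
  have hsplit : v ᵥ* P ᵥ* M - h = (v - h) ᵥ* P ᵥ* M + (h ᵥ* (P - B)) ᵥ* M := by
    conv_lhs => rw [← hfix]
    rw [← sub_vecMul, ← add_vecMul, sub_vecMul P v h, vecMul_sub, sub_add_sub_cancel]
  have hneg : h ᵥ* (P - B) = -(h ᵥ* (B - P)) := by
    rw [← vecMul_neg, neg_sub]
  calc ∑ i, |(v ᵥ* P ᵥ* M) i - h i|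
      ≤ ∑ i, (|((v - h) ᵥ* P ᵥ* M) i| + |((h ᵥ* (P - B)) ᵥ* M) i|) := by
        refine sum_le_sum fun i _ => ?_
        rw [← Pi.sub_apply (v ᵥ* P ᵥ* M), hsplit]
        exact abs_add_le _ _
    _ ≤ ∑ j, |((v - h) ᵥ* P) j| + ∑ j, |(h ᵥ* (P - B)) j| := by
        rw [sum_add_distrib]
        gcongr <;> exact sum_abs_vecMul_le_of_stochastic M hM hMrow _
    _ ≤ ∑ i, |v i - h i| + ∑ j, |(h ᵥ* (B - P)) j| := by
        rw [hneg]
        simp only [Pi.neg_apply, abs_neg]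
        gcongr
        exact sum_abs_vecMul_le_of_stochastic P hP hProw _

end Stochastic

section Policy

variable {σ α : Type*} [Fintype α] [DecidableEq σ]

/-- The matrix `B` of the paper. -/
def stateAggregation : Matrix (σ × α) σ ℝ := fun r x => if r.1 = x then 1 else 0

/-- The policy matrix `M^h` of the paper, `M^h(x, (x, a)) = h(a | x)`. -/
noncomputable def policyMatrix (h : σ × α → ℝ) : Matrix σ (σ × α) ℝ :=
  fun x r => if r.1 = x then h r / ∑ a, h (x, a) else 0

theorem policyMatrix_nonneg {h : σ × α → ℝ} (hh : ∀ r, 0 ≤ h r) (x : σ) (r : σ × α) :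
    0 ≤ policyMatrix h x r := by
  unfold policyMatrix
  split_ifs
  · exact div_nonneg (hh r) (sum_nonneg fun a _ => hh _)
  · exact le_rfl

theorem sum_policyMatrix [Fintype σ] {h : σ × α → ℝ} {x : σ} (hx : ∑ a, h (x, a) ≠ 0) :
    ∑ r, policyMatrix h x r = 1 := by
  rw [Fintype.sum_prod_type, sum_eq_single x]
  · simp [policyMatrix, ← sum_div, div_self hx]
  · intro y _ hy
    simp [policyMatrix, hy]
  · simp

theorem vecMul_stateAggregation [Fintype σ] (h : σ × α → ℝ) (x : σ) :
    (h ᵥ* stateAggregation) x = ∑ a, h (x, a) := by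
  rw [vecMul, dotProduct, Fintype.sum_prod_type, sum_eq_single x]
  · simp [stateAggregation]
  · intro y _ hy
    simp [stateAggregation, hy]
  · simp

theorem vecMul_stateAggregation_vecMul_policyMatrix [Fintype σ] {h : σ × α → ℝ}
    (hmarg : ∀ x, ∑ a, h (x, a) ≠ 0) : h ᵥ* stateAggregation ᵥ* policyMatrix h = h := by
  ext r
  change ∑ x, (h ᵥ* stateAggregation) x * policyMatrix h x r = h r
  simp only [vecMul_stateAggregation, policyMatrix, mul_ite, mul_zero, sum_ite_eq, mem_univ,
    if_true, mul_div_cancel₀ _ (hmarg r.1)]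

end Policy

theorem stmt_2_general (X A : ℕ)
    (P : Matrix (Fin X × Fin A) (Fin X) ℝ)
    (hPnonneg : ∀ r x', 0 ≤ P r x') (hProw : ∀ r, ∑ x', P r x' = 1)
    (B : Matrix (Fin X × Fin A) (Fin X) ℝ)
    (hB : ∀ r x', B r x' = if r.1 = x' then 1 else 0)
    (h : Fin X × Fin A → ℝ)
    (hhnonneg : ∀ r, 0 ≤ h r)
    (hmarg : ∀ x : Fin X, 0 < ∑ a, h (x, a))
    (M : Matrix (Fin X) (Fin X × Fin A) ℝ)
    (hM : ∀ x r, M x r = if r.1 = x then h r / (∑ a, h (x, a)) else 0)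
    (c : ℝ)
    (hstat : ∑ x', |∑ r, h r * (B r x' - P r x')| ≤ c)
    (ν : ℕ → Fin X × Fin A → ℝ)
    (hν0 : ν 0 = h)
    (hrec : ∀ k, ν (k + 1) = fun r' => ∑ x, (∑ r, ν k r * P r x) * M x r')
    (k : ℕ) :
    ∑ r, |ν k r - h r| ≤ k * c := by
  obtain rfl : B = stateAggregation := Matrix.ext hB
  obtain rfl : M = policyMatrix h := Matrix.ext hM
  have hfix := vecMul_stateAggregation_vecMul_policyMatrix fun x => (hmarg x).ne'
  have step := sum_abs_vecMul_vecMul_sub_le P _ _ hPnonneg hProw (policyMatrix_nonneg hhnonneg)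
    (fun x => sum_policyMatrix (hmarg x).ne') hfix
  induction k with
  | zero => simp [hν0]
  | succ k ih =>
    calc ∑ r, |ν (k + 1) r - h r| ≤ ∑ r, |ν k r - h r| + c := by
          rw [hrec]
          exact (step (ν k)).trans (add_le_add_right hstat _)
      _ ≤ (k + 1 : ℕ) * c := by push_cast; linarith

/-- if `h` is a state-action distribution with
`‖hᵀ(B−P)‖₁ ≤ c`, and `ν_k` is the state-action distribution after running
the policy induced by `h` for `k` steps from `ν₀ = h`
(i.e. `ν_{k+1}ᵀ = ν_kᵀ P M^h`), then `‖ν_k − h‖₁ ≤ k·c`. -/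
theorem stmt_2 (X A : ℕ)
    (P : Matrix (Fin X × Fin A) (Fin X) ℝ)
    (hPnonneg : ∀ r x', 0 ≤ P r x') (hProw : ∀ r, ∑ x', P r x' = 1)
    (B : Matrix (Fin X × Fin A) (Fin X) ℝ)
    (hB : ∀ r x', B r x' = if r.1 = x' then 1 else 0)
    (h : Fin X × Fin A → ℝ)
    (hhnonneg : ∀ r, 0 ≤ h r) (hhsum : ∑ r, h r = 1)
    (hmarg : ∀ x : Fin X, 0 < ∑ a, h (x, a))
    (M : Matrix (Fin X) (Fin X × Fin A) ℝ)
    (hM : ∀ x r, M x r = if r.1 = x then h r / (∑ a, h (x, a)) else 0)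
    (c : ℝ)
    (hstat : ∑ x', |∑ r, h r * (B r x' - P r x')| ≤ c)
    (ν : ℕ → Fin X × Fin A → ℝ)
    (hν0 : ν 0 = h)
    (hrec : ∀ k, ν (k + 1) = fun r' => ∑ x, (∑ r, ν k r * P r x) * M x r')
    (k : ℕ) :
    ∑ r, |ν k r - h r| ≤ k * c :=
  stmt_2_general X A P hPnonneg hProw B hB h hhnonneg hmarg M hM c hstat ν hν0 hrec k
end
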